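/- The function α₁ is strictly increasing, strictly convex, and C¹ on [-1,1), with derivative α₁'(e) = 2√2 ∫₀^{θ₁(e)} (e + cos θ)^{-1/2} dθ for e ∈ (-1,1), and its right-derivative at e = -1 equals 2π. -/

import Mathlib

open Real Set

noncomputable def theta1 (e : ℝ) : ℝ := Real.arccos (-e)

/-- α₁(e) = 4√2 ∫₀^{θ₁(e)} (e + cos θ)^{1/2} dθ. -/
noncomputable def alpha1 (e : ℝ) : ℝ :=
  4 * Real.sqrt 2 * ∫ θ in (0:ℝ)..(theta1 e), Real.sqrt (e + Real.cos θ)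

/-- α₁'(e) = 2√2 ∫₀^{θ₁(e)} (e + cos θ)^{-1/2} dθ. -/
noncomputable def dalpha1 (e : ℝ) : ℝ :=
  2 * Real.sqrt 2 * ∫ θ in (0:ℝ)..(theta1 e), 1 / Real.sqrt (e + Real.cos θ)

/-!
The substitution `θ = 2 arcsin (√((1 + e) / 2) cos ψ)` maps `ψ ∈ [0, π/2]` decreasingly onto
`[0, θ₁(e)]`, with `e + cos θ = (1 + e) sin² ψ` and
`dθ = -2 √(1 + e) sin ψ / √(2 - (1 + e) cos² ψ) dψ`. Hence
`α₁(e) = 8√2 (1 + e) ∫₀^{π/2} sin² ψ / √(2 - (1 + e) cos² ψ) dψ` and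
`2√2 ∫₀^{θ₁(e)} (e + cos θ)^{-1/2} dθ = 4√2 ∫₀^{π/2} (2 - (1 + e) cos² ψ)^{-1/2} dψ`.
These integrands are smooth in `e < 1`, so the first formula extends `α₁` across `e = -1` and can be
differentiated under the integral sign; an integration by parts identifies its derivative with the
second formula. That derivative is positive, strictly increasing in `e` because the denominator
decreases, and equals `2π` at `e = -1`.
-/

open MeasureTheory Filter

namespace Alpha1

noncomputable def denom (e ψ : ℝ) : ℝ := 2 - (1 + e) * cos ψ ^ 2

lemma min_le_denom {b e : ℝ} (heb : e ≤ b) (ψ : ℝ) : min 2 (1 - b) ≤ denom e ψ := by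
  have := cos_sq_le_one ψ
  rcases le_total 0 (1 + e) with h | h
  · exact (min_le_right _ _).trans (by unfold denom; nlinarith)
  · exact (min_le_left _ _).trans (by unfold denom; nlinarith [sq_nonneg (cos ψ)])

lemma denom_pos {e : ℝ} (he : e < 1) (ψ : ℝ) : 0 < denom e ψ :=
  (lt_min two_pos (by linarith)).trans_le (min_le_denom le_rfl ψ)

lemma sqrt_denom_pos {e : ℝ} (he : e < 1) (ψ : ℝ) : 0 < √(denom e ψ) :=
  sqrt_pos.mpr (denom_pos he ψ)

@[fun_prop]
lemma continuous_sqrt_denom (e : ℝ) : Continuous fun ψ => √(denom e ψ) := by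
  unfold denom; fun_prop

lemma continuous_one_div_sqrt_denom {e : ℝ} (he : e < 1) :
    Continuous fun ψ => 1 / √(denom e ψ) :=
  continuous_const.div (continuous_sqrt_denom e) fun ψ => (sqrt_denom_pos he ψ).ne'

/-- `√2 * invSqrtIntegral e` is the complete elliptic integral `K(m)` with `m = (1 + e) / 2`. -/
noncomputable def invSqrtIntegral (e : ℝ) : ℝ := ∫ ψ in 0..π / 2, 1 / √(denom e ψ)

noncomputable def sinSqIntegral (e : ℝ) : ℝ := ∫ ψ in 0..π / 2, sin ψ ^ 2 / √(denom e ψ)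

noncomputable def theta (e ψ : ℝ) : ℝ := 2 * arcsin (√((1 + e) / 2) * cos ψ)

lemma cos_theta {e : ℝ} (he : -1 ≤ e) (he₁ : e ≤ 1) (ψ : ℝ) :
    cos (theta e ψ) = 1 - (1 + e) * cos ψ ^ 2 := by
  have hc : √((1 + e) / 2) ^ 2 = (1 + e) / 2 := sq_sqrt (by linarith)
  have hbound : |√((1 + e) / 2) * cos ψ| ≤ 1 := by
    rw [abs_mul, abs_of_nonneg (sqrt_nonneg _)]
    exact mul_le_one₀ (sqrt_le_one.mpr (by linarith)) (abs_nonneg _) (abs_cos_le_one ψ)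
  rw [theta, cos_two_mul', cos_sq', sin_arcsin (neg_le_of_abs_le hbound)
    (le_of_abs_le hbound), mul_pow, hc]
  ring

lemma theta_zero {e : ℝ} (he : -1 ≤ e) (he₁ : e ≤ 1) : theta e 0 = theta1 e := by
  have h₀ : 0 ≤ theta e 0 := by
    simp only [theta, cos_zero, mul_one]
    linarith [arcsin_nonneg.mpr (sqrt_nonneg ((1 + e) / 2))]
  have hπ : theta e 0 ≤ π := by
    simp only [theta, cos_zero, mul_one]
    linarith [arcsin_le_pi_div_two (√((1 + e) / 2))]
  rw [theta1, ← arccos_cos h₀ hπ, cos_theta he he₁, cos_zero]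
  ring_nf

lemma theta_pi_div_two (e : ℝ) : theta e (π / 2) = 0 := by
  simp [theta]

lemma hasDerivAt_theta {e : ℝ} (he : -1 ≤ e) (he₁ : e < 1) (ψ : ℝ) :
    HasDerivAt (theta e) (-(2 * √(1 + e) * sin ψ / √(denom e ψ))) ψ := by
  set c := √((1 + e) / 2) with hc_def
  have hc : c ^ 2 = (1 + e) / 2 := sq_sqrt (by linarith)
  have hc₁ : c < 1 := (sqrt_lt' one_pos).mpr (by linarith)
  have hbound : |c * cos ψ| < 1 := by
    rw [abs_mul, abs_of_nonneg (sqrt_nonneg _)]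
    exact (mul_le_of_le_one_right (sqrt_nonneg _) (abs_cos_le_one ψ)).trans_lt hc₁
  have hdenom : √(1 - (c * cos ψ) ^ 2) = √(denom e ψ) / √2 := by
    rw [← sqrt_div (denom_pos he₁ ψ).le, denom, mul_pow, hc]
    ring_nf
  have harcsin := hasDerivAt_arcsin (neg_lt_of_abs_lt hbound).ne' (lt_of_abs_lt hbound).ne
  refine ((harcsin.comp ψ ((hasDerivAt_cos ψ).const_mul c)).const_mul 2).congr_deriv ?_
  rw [hdenom, hc_def, sqrt_div (by linarith)]
  have := sqrt_denom_pos he₁ ψ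
  field_simp

lemma strictAntiOn_theta {e : ℝ} (he : -1 < e) (he₁ : e < 1) :
    StrictAntiOn (theta e) (Icc 0 π) :=
  strictAntiOn_of_hasDerivWithinAt_neg (convex_Icc 0 π)
    (fun ψ _ => (hasDerivAt_theta he.le he₁ ψ).continuousAt.continuousWithinAt)
    (fun ψ _ => (hasDerivAt_theta he.le he₁ ψ).hasDerivWithinAt) fun ψ hψ => by
      rw [interior_Icc] at hψ
      have := sin_pos_of_pos_of_lt_pi hψ.1 hψ.2
      have := sqrt_denom_pos he₁ ψ
      have : 0 < √(1 + e) := sqrt_pos.mpr (by linarith)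
      simp only [neg_lt_zero]
      positivity

lemma theta_image_Ioo {e : ℝ} (he : -1 < e) (he₁ : e < 1) :
    theta e '' Ioo 0 (π / 2) = Ioo 0 (theta1 e) := by
  have h := ContinuousOn.image_Ioo_of_strictAntiOn (a := 0) (b := π / 2) (by positivity)
    (fun ψ _ => (hasDerivAt_theta he.le he₁ ψ).continuousAt.continuousWithinAt)
    ((strictAntiOn_theta he he₁).mono (Icc_subset_Icc_right (by linarith [pi_pos])))
  rwa [theta_pi_div_two, theta_zero he.le he₁.le] at h

lemma integral_comp_add_cos {e : ℝ} (he : -1 < e) (he₁ : e < 1) (G : ℝ → ℝ) :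
    ∫ θ in 0..theta1 e, G (e + cos θ)
      = ∫ ψ in 0..π / 2, 2 * √(1 + e) * sin ψ / √(denom e ψ) * G ((1 + e) * sin ψ ^ 2) := by
  have hθ₁ : 0 ≤ theta1 e := arccos_nonneg _
  rw [intervalIntegral.integral_of_le hθ₁,
    intervalIntegral.integral_of_le (by positivity), integral_Ioc_eq_integral_Ioo,
    integral_Ioc_eq_integral_Ioo, ← theta_image_Ioo he he₁,
    integral_image_eq_integral_abs_deriv_smul measurableSet_Ioo
      (fun ψ _ => (hasDerivAt_theta he.le he₁ ψ).hasDerivWithinAt)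
      ((strictAntiOn_theta he he₁).injOn.mono
        (Ioo_subset_Icc_self.trans (Icc_subset_Icc_right (by linarith [pi_pos]))))]
  refine setIntegral_congr_fun measurableSet_Ioo fun ψ hψ => ?_
  have := sin_pos_of_pos_of_lt_pi hψ.1 (by linarith [hψ.2, pi_pos])
  have := sqrt_denom_pos he₁ ψ
  have : 0 < √(1 + e) := sqrt_pos.mpr (by linarith)
  rw [smul_eq_mul, abs_neg, abs_of_pos (by positivity), cos_theta he.le he₁.le, sin_sq]
  ring_nf

lemma integral_sqrt_add_cos {e : ℝ} (he : -1 < e) (he₁ : e < 1) :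
    ∫ θ in 0..theta1 e, √(e + cos θ) = 2 * (1 + e) * sinSqIntegral e := by
  rw [integral_comp_add_cos he he₁, sinSqIntegral, ← intervalIntegral.integral_const_mul]
  refine intervalIntegral.integral_congr fun ψ hψ => ?_
  rw [uIcc_of_le (by positivity)] at hψ
  have hsin : 0 ≤ sin ψ := sin_nonneg_of_nonneg_of_le_pi hψ.1 (by linarith [hψ.2, pi_pos])
  have h1e : 0 ≤ 1 + e := by linarith
  rw [sqrt_mul h1e, sqrt_sq hsin]
  linear_combination (2 * sin ψ ^ 2 / √(denom e ψ)) * sq_sqrt h1e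

lemma integral_inv_sqrt_add_cos {e : ℝ} (he : -1 < e) (he₁ : e < 1) :
    ∫ θ in 0..theta1 e, 1 / √(e + cos θ) = 2 * invSqrtIntegral e := by
  refine (integral_comp_add_cos he he₁ (fun x => 1 / √x)).trans ?_
  rw [invSqrtIntegral, ← intervalIntegral.integral_const_mul]
  -- only a.e.: at `ψ = 0` the left integrand is `0 * (1 / √0) = 0`
  refine intervalIntegral.integral_congr_ae (Eventually.of_forall fun ψ hψ => ?_)
  rw [uIoc_of_le (by positivity)] at hψ
  have hsin := sin_pos_of_pos_of_lt_pi hψ.1 (by linarith [hψ.2, pi_pos])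
  have := sqrt_denom_pos he₁ ψ
  have : 0 < √(1 + e) := sqrt_pos.mpr (by linarith)
  rw [sqrt_mul (by linarith), sqrt_sq hsin.le]
  field_simp

noncomputable def alpha1Ext (e : ℝ) : ℝ := 8 * √2 * ((1 + e) * sinSqIntegral e)

lemma alpha1_eqOn_alpha1Ext : EqOn alpha1 alpha1Ext (Ico (-1) 1) := by
  rintro e ⟨he, he₁⟩
  rcases he.eq_or_lt with rfl | he
  · simp [alpha1, alpha1Ext, theta1]
  · rw [alpha1, alpha1Ext, integral_sqrt_add_cos he he₁]
    ring

lemma dalpha1_eq {e : ℝ} (he : -1 < e) (he₁ : e < 1) :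
    dalpha1 e = 4 * √2 * invSqrtIntegral e := by
  rw [dalpha1, integral_inv_sqrt_add_cos he he₁]
  ring

lemma hasDerivAt_one_div_sqrt_denom {e : ℝ} (he : e < 1) (ψ : ℝ) :
    HasDerivAt (fun e => 1 / √(denom e ψ)) (cos ψ ^ 2 / (2 * √(denom e ψ) ^ 3)) e := by
  have hD : HasDerivAt (fun e => denom e ψ) (-cos ψ ^ 2) e :=
    ((((hasDerivAt_id' e).const_add 1).mul_const (cos ψ ^ 2)).const_sub 2).congr_deriv (by ring)
  refine ((hasDerivAt_const e 1).div (hD.sqrt (denom_pos he ψ).ne')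
    (sqrt_denom_pos he ψ).ne').congr_deriv ?_
  have := sqrt_denom_pos he ψ
  field_simp
  ring

lemma hasDerivAt_integral_div_sqrt_denom {w : ℝ → ℝ} (hw : Continuous w) {e₀ : ℝ}
    (he₀ : e₀ < 1) :
    HasDerivAt (fun e => ∫ ψ in 0..π / 2, w ψ / √(denom e ψ))
      (∫ ψ in 0..π / 2, w ψ * cos ψ ^ 2 / (2 * √(denom e₀ ψ) ^ 3)) e₀ := by
  obtain ⟨b, hb₀, hb⟩ := exists_between he₀
  have hbound : ∀ ψ, ∀ e ∈ Iio b,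
      ‖w ψ * cos ψ ^ 2 / (2 * √(denom e ψ) ^ 3)‖ ≤ |w ψ| / (2 * √(min 2 (1 - b)) ^ 3) := by
    intro ψ e he
    have hm : 0 < √(min 2 (1 - b)) := sqrt_pos.mpr (lt_min two_pos (by linarith))
    have hsq : √(min 2 (1 - b)) ≤ √(denom e ψ) := sqrt_le_sqrt (min_le_denom (le_of_lt he) ψ)
    have hpos : 0 < 2 * √(denom e ψ) ^ 3 := by have := hm.trans_le hsq; positivity
    rw [norm_div, norm_mul, norm_pow, Real.norm_eq_abs, Real.norm_eq_abs, Real.norm_eq_abs,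
      abs_of_pos hpos, sq_abs]
    gcongr
    exact mul_le_of_le_one_right (abs_nonneg _) (cos_sq_le_one ψ)
  refine (intervalIntegral.hasDerivAt_integral_of_dominated_loc_of_deriv_le (Iio_mem_nhds hb₀)
    (Eventually.of_forall fun e => ?_) ?_ ?_ (Eventually.of_forall fun ψ _ => hbound ψ) ?_
    (Eventually.of_forall fun ψ _ e he => ?_)).2
  · exact (hw.measurable.div (continuous_sqrt_denom e).measurable).aestronglyMeasurable
  · exact Continuous.intervalIntegrable (by
      fun_prop (disch := intro ψ; have := sqrt_denom_pos he₀ ψ; positivity)) _ _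
  · exact Continuous.aestronglyMeasurable (by
      fun_prop (disch := intro ψ; have := sqrt_denom_pos he₀ ψ; positivity))
  · exact (hw.abs.div_const _).intervalIntegrable _ _
  · simpa only [mul_one_div, mul_div_assoc] using
      (hasDerivAt_one_div_sqrt_denom ((show e < b from he).trans hb) ψ).const_mul (w ψ)

lemma hasDerivAt_sin_mul_cos_div_sqrt_denom {e : ℝ} (he : e < 1) (ψ : ℝ) :
    HasDerivAt (fun ψ => -(sin ψ * cos ψ) / (2 * √(denom e ψ)))
      (sin ψ ^ 2 / √(denom e ψ) + (1 + e) * (sin ψ ^ 2 * cos ψ ^ 2 / (2 * √(denom e ψ) ^ 3))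
        - 1 / √(denom e ψ) / 2) ψ := by
  have hD : HasDerivAt (fun ψ => denom e ψ) ((1 + e) * (2 * cos ψ * sin ψ)) ψ := by
    have := (((hasDerivAt_cos ψ).pow 2).const_mul (1 + e)).const_sub 2
    exact this.congr_deriv (by ring)
  have hnum : HasDerivAt (fun ψ => -(sin ψ * cos ψ)) (-(cos ψ * cos ψ + sin ψ * -sin ψ)) ψ :=
    ((hasDerivAt_sin ψ).mul (hasDerivAt_cos ψ)).neg
  refine (hnum.div ((hD.sqrt (denom_pos he ψ).ne').const_mul 2)
    (mul_pos two_pos (sqrt_denom_pos he ψ)).ne').congr_deriv ?_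
  have := sqrt_denom_pos he ψ
  field_simp
  linear_combination (-√(denom e ψ) ^ 2) * sin_sq_add_cos_sq ψ

/-- Integration by parts against `-sin ψ cos ψ / (2 √(denom e ψ))`, which vanishes at both
ends. -/
lemma sinSqIntegral_add_mul_integral {e : ℝ} (he : e < 1) :
    sinSqIntegral e + (1 + e) * ∫ ψ in 0..π / 2, sin ψ ^ 2 * cos ψ ^ 2 / (2 * √(denom e ψ) ^ 3)
      = invSqrtIntegral e / 2 := by
  have hsinSq : IntervalIntegrable (fun ψ => sin ψ ^ 2 / √(denom e ψ)) volume 0 (π / 2) := by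
    apply Continuous.intervalIntegrable
    fun_prop (disch := intro ψ; have := sqrt_denom_pos he ψ; positivity)
  have hmixed : IntervalIntegrable (fun ψ => sin ψ ^ 2 * cos ψ ^ 2 / (2 * √(denom e ψ) ^ 3))
      volume 0 (π / 2) := by
    apply Continuous.intervalIntegrable
    fun_prop (disch := intro ψ; have := sqrt_denom_pos he ψ; positivity)
  have hinv := (continuous_one_div_sqrt_denom he).intervalIntegrable (μ := volume) 0 (π / 2)
  have hzero := intervalIntegral.integral_eq_sub_of_hasDerivAt
    (fun ψ _ => hasDerivAt_sin_mul_cos_div_sqrt_denom he ψ)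
    ((hsinSq.add (hmixed.const_mul (1 + e))).sub (hinv.div_const 2))
  rw [intervalIntegral.integral_sub (hsinSq.add (hmixed.const_mul (1 + e))) (hinv.div_const 2),
    intervalIntegral.integral_add hsinSq (hmixed.const_mul (1 + e)),
    intervalIntegral.integral_const_mul, intervalIntegral.integral_div] at hzero
  simp only [sin_zero, cos_pi_div_two, mul_zero, zero_mul, neg_zero, zero_div, sub_zero] at hzero
  unfold sinSqIntegral invSqrtIntegral
  linarith

lemma hasDerivAt_sinSqIntegral {e : ℝ} (he : e < 1) :
    HasDerivAt sinSqIntegral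
      (∫ ψ in 0..π / 2, sin ψ ^ 2 * cos ψ ^ 2 / (2 * √(denom e ψ) ^ 3)) e :=
  hasDerivAt_integral_div_sqrt_denom (continuous_sin.pow 2) he

lemma continuousOn_invSqrtIntegral : ContinuousOn invSqrtIntegral (Iio 1) := fun _ he =>
  (hasDerivAt_integral_div_sqrt_denom continuous_const he).continuousAt.continuousWithinAt

lemma invSqrtIntegral_pos {e : ℝ} (he : e < 1) : 0 < invSqrtIntegral e :=
  intervalIntegral.intervalIntegral_pos_of_pos_on
    ((continuous_one_div_sqrt_denom he).intervalIntegrable _ _)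
    (fun ψ _ => one_div_pos.mpr (sqrt_denom_pos he ψ)) (by positivity)

lemma strictMonoOn_invSqrtIntegral : StrictMonoOn invSqrtIntegral (Iio 1) := by
  intro e₁ he₁ e₂ he₂ hlt
  have hle : ∀ ψ, denom e₂ ψ ≤ denom e₁ ψ := fun ψ => by
    unfold denom; nlinarith [sq_nonneg (cos ψ)]
  refine intervalIntegral.integral_lt_integral_of_continuousOn_of_le_of_exists_lt
    (by positivity) (continuous_one_div_sqrt_denom he₁).continuousOn
    (continuous_one_div_sqrt_denom he₂).continuousOn
    (fun ψ _ => one_div_le_one_div_of_le (sqrt_denom_pos he₂ ψ) (sqrt_le_sqrt (hle ψ)))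
    ⟨0, ⟨le_rfl, by positivity⟩, one_div_lt_one_div_of_lt (sqrt_denom_pos he₂ 0)
      (sqrt_lt_sqrt (denom_pos he₂ 0).le (by simp only [denom, cos_zero]; linarith))⟩

lemma invSqrtIntegral_neg_one : invSqrtIntegral (-1) = π / (2 * √2) := by
  simp only [invSqrtIntegral, denom, add_neg_cancel, zero_mul, sub_zero,
    intervalIntegral.integral_const, smul_eq_mul]
  field_simp

lemma hasDerivAt_alpha1Ext {e : ℝ} (he : e < 1) :
    HasDerivAt alpha1Ext (4 * √2 * invSqrtIntegral e) e := by
  refine ((((hasDerivAt_id' e).const_add 1).mul (hasDerivAt_sinSqIntegral he)).const_mul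
    (8 * √2)).congr_deriv ?_
  linear_combination (8 * √2) * sinSqIntegral_add_mul_integral he

lemma hasDerivAt_alpha1Ext_neg_one : HasDerivAt alpha1Ext (2 * π) (-1) := by
  convert hasDerivAt_alpha1Ext (show (-1 : ℝ) < 1 by norm_num) using 1
  rw [invSqrtIntegral_neg_one]
  field_simp
  norm_num

lemma deriv_alpha1Ext :
    EqOn (deriv alpha1Ext) (fun e => 4 * √2 * invSqrtIntegral e) (Iio 1) :=
  fun _ he => (hasDerivAt_alpha1Ext he).deriv

lemma continuousOn_alpha1Ext : ContinuousOn alpha1Ext (Iio 1) := fun _ he =>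
  (hasDerivAt_alpha1Ext he).continuousAt.continuousWithinAt

lemma strictMonoOn_alpha1Ext : StrictMonoOn alpha1Ext (Iio 1) :=
  strictMonoOn_of_deriv_pos (convex_Iio 1) continuousOn_alpha1Ext fun e he => by
    rw [interior_Iio] at he
    rw [deriv_alpha1Ext he]
    exact mul_pos (by positivity) (invSqrtIntegral_pos he)

lemma strictConvexOn_alpha1Ext : StrictConvexOn ℝ (Iio 1) alpha1Ext := by
  refine StrictMonoOn.strictConvexOn_of_deriv (convex_Iio 1) continuousOn_alpha1Ext ?_
  rw [interior_Iio]
  refine StrictMonoOn.congr (fun a ha b hb hab => ?_) deriv_alpha1Ext.symm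
  exact mul_lt_mul_of_pos_left (strictMonoOn_invSqrtIntegral ha hb hab) (by positivity)

lemma contDiffOn_alpha1Ext : ContDiffOn ℝ 1 alpha1Ext (Iio 1) := by
  rw [show (1 : WithTop ℕ∞) = 0 + 1 from rfl, contDiffOn_succ_iff_deriv_of_isOpen isOpen_Iio]
  refine ⟨fun e he => (hasDerivAt_alpha1Ext he).differentiableAt.differentiableWithinAt,
    by simp, ?_⟩
  exact contDiffOn_zero.mpr
    ((continuousOn_invSqrtIntegral.const_smul (4 * √2)).congr deriv_alpha1Ext)

end Alpha1

/-- α₁ is strictly increasing, strictly convex and C¹ on [-1,1),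
with derivative 2√2 ∫₀^{θ₁(e)} (e + cos θ)^{-1/2} dθ on (-1,1) and
right-derivative 2π at e = -1. -/
theorem alpha1_convex_left :
    StrictMonoOn alpha1 (Set.Ico (-1:ℝ) 1) ∧
    StrictConvexOn ℝ (Set.Ico (-1:ℝ) 1) alpha1 ∧
    ContDiffOn ℝ 1 alpha1 (Set.Ico (-1:ℝ) 1) ∧
    (∀ e ∈ Set.Ioo (-1:ℝ) 1, HasDerivAt alpha1 (dalpha1 e) e) ∧
    HasDerivWithinAt alpha1 (2 * π) (Set.Ici (-1:ℝ)) (-1) := by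
  have hEq := Alpha1.alpha1_eqOn_alpha1Ext
  have hsub : Ico (-1 : ℝ) 1 ⊆ Iio 1 := Ico_subset_Iio_self
  refine ⟨(Alpha1.strictMonoOn_alpha1Ext.mono hsub).congr hEq.symm,
    (Alpha1.strictConvexOn_alpha1Ext.subset hsub (convex_Ico _ _)).congr hEq.symm,
    (Alpha1.contDiffOn_alpha1Ext.mono hsub).congr hEq, fun e he => ?_, ?_⟩
  · rw [Alpha1.dalpha1_eq he.1 he.2]
    exact (Alpha1.hasDerivAt_alpha1Ext he.2).congr_of_eventuallyEq
      (hEq.eventuallyEq_of_mem (Ico_mem_nhds he.1 he.2))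
  · exact Alpha1.hasDerivAt_alpha1Ext_neg_one.hasDerivWithinAt.congr_of_eventuallyEq
      (hEq.eventuallyEq_of_mem (Ico_mem_nhdsGE (by norm_num))) (hEq ⟨le_rfl, by norm_num⟩)
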